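/- Let E be an infinite-dimensional Banach space and let 𝒜 = 𝒜(E) be the algebra of approximable operators on E. Then AP(𝒜') = {0}: the only functional U ∈ 𝒜(E)' for which the map 𝒜(E) → 𝒜(E)', T ↦ T·U is compact, is U = 0. -/

import Mathlib

/-!
Write `g ⊗ y` for the rank-one operator `z ↦ g z • y`. If `U ≠ 0`, density of the finite-rank
operators and their decomposition into rank-one operators give `a₀ = φ⁻¹(g ⊗ x₀)` with
`U a₀ ≠ 0`. Since `(f ⊗ x₀)(g ⊗ y) = f(y) · (g ⊗ x₀)`, testing `φ⁻¹(g ⊗ y) · U` against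
`φ⁻¹(f ⊗ x₀)`, with `f` a norming functional of `y`, gives `‖y‖ ‖U a₀‖ ≤ ‖φ⁻¹(g ⊗ y) · U‖ ‖x₀‖`.
Thus `y ↦ φ⁻¹(g ⊗ y) · U` is a compact operator on `E` that is bounded below, so `E` is
finite-dimensional.
-/

set_option maxSynthPendingDepth 3
set_option maxHeartbeats 1000000
set_option synthInstance.maxHeartbeats 1000000

noncomputable section

open Filter Metric Topology ContinuousLinearMap
open scoped ENNReal

universe u v w y

namespace UPaper

/-- The (topological) dual of a complex normed space. -/
abbrev Dl (E : Type u) [NormedAddCommGroup E] [NormedSpace ℂ E] : Type u := E →L[ℂ] ℂ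

section Arens

variable {E : Type u} [NormedAddCommGroup E] [NormedSpace ℂ E]

/-- The right action of an algebra `(E, m)` on its dual:
`rAct m a μ = μ · a`, i.e. `⟨μ·a, b⟩ = ⟨μ, ab⟩`. -/
def rAct (m : E →L[ℂ] E →L[ℂ] E) : E →L[ℂ] Dl E →L[ℂ] Dl E :=
  (compL ℂ E E ℂ).flip.comp m

/-- The left action of an algebra `(E, m)` on its dual:
`lAct m a μ = a · μ`, i.e. `⟨a·μ, b⟩ = ⟨μ, ba⟩`. -/
def lAct (m : E →L[ℂ] E →L[ℂ] E) : E →L[ℂ] Dl E →L[ℂ] Dl E :=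
  (compL ℂ E E ℂ).flip.comp m.flip

/-- `arAct m Ψ μ = Ψ · μ`, i.e. `⟨Ψ·μ, a⟩ = ⟨Ψ, μ·a⟩`. -/
def arAct (m : E →L[ℂ] E →L[ℂ] E) : Dl (Dl E) →L[ℂ] Dl E →L[ℂ] Dl E :=
  letI T1 : ((E →L[ℂ] Dl E) →L[ℂ] Dl E) →L[ℂ] (Dl E →L[ℂ] Dl E) :=
    (compL ℂ (Dl E) (E →L[ℂ] Dl E) (Dl E)).flip ((rAct m).flip)
  letI T2 : Dl (Dl E) →L[ℂ] ((E →L[ℂ] Dl E) →L[ℂ] Dl E) := compL ℂ E (Dl E) ℂ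
  T1.comp T2

/-- `brAct m Φ μ = μ · Φ`, i.e. `⟨μ·Φ, a⟩ = ⟨Φ, a·μ⟩`. -/
def brAct (m : E →L[ℂ] E →L[ℂ] E) : Dl (Dl E) →L[ℂ] Dl E →L[ℂ] Dl E :=
  letI T1 : ((E →L[ℂ] Dl E) →L[ℂ] Dl E) →L[ℂ] (Dl E →L[ℂ] Dl E) :=
    (compL ℂ (Dl E) (E →L[ℂ] Dl E) (Dl E)).flip ((lAct m).flip)
  letI T2 : Dl (Dl E) →L[ℂ] ((E →L[ℂ] Dl E) →L[ℂ] Dl E) := compL ℂ E (Dl E) ℂ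
  T1.comp T2

/-- The first Arens product on the bidual: `⟨Φ □ Ψ, μ⟩ = ⟨Φ, Ψ·μ⟩`. -/
def arensMul1 (m : E →L[ℂ] E →L[ℂ] E) : Dl (Dl E) →L[ℂ] Dl (Dl E) →L[ℂ] Dl (Dl E) :=
  ((compL ℂ (Dl E) (Dl E) ℂ).flip.comp (arAct m)).flip

/-- The second Arens product on the bidual: `⟨Φ ◇ Ψ, μ⟩ = ⟨Ψ, μ·Φ⟩`. -/
def arensMul2 (m : E →L[ℂ] E →L[ℂ] E) : Dl (Dl E) →L[ℂ] Dl (Dl E) →L[ℂ] Dl (Dl E) :=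
  (compL ℂ (Dl E) (Dl E) ℂ).flip.comp (brAct m)

/-- Sanity check: the above maps are given by their correct defining formulas. -/
theorem arens_apply (m : E →L[ℂ] E →L[ℂ] E) (Φ Ψ : Dl (Dl E)) (μ : Dl E) (a b : E) :
    rAct m a μ b = μ (m a b) ∧ lAct m a μ b = μ (m b a) ∧
    arAct m Ψ μ a = Ψ (rAct m a μ) ∧ brAct m Φ μ a = Φ (lAct m a μ) ∧
    arensMul1 m Φ Ψ μ = Φ (arAct m Ψ μ) ∧ arensMul2 m Φ Ψ μ = Ψ (brAct m Φ μ) :=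
  ⟨by simp [rAct], by simp [lAct], by simp [arAct], by simp [brAct],
    by simp [arensMul1, arAct], by simp [arensMul2, brAct]⟩

/-- The algebra `(E, m)` is Arens regular: its two Arens products coincide. -/
def ArensRegularWith (m : E →L[ℂ] E →L[ℂ] E) : Prop :=
  ∀ Φ Ψ : Dl (Dl E), arensMul1 m Φ Ψ = arensMul2 m Φ Ψ

/-- `μ` is a weakly almost periodic functional on the algebra `(E, m)`: the orbit map
`a ↦ a·μ` is a weakly compact operator `E → E'`, i.e. the image of the closed unit ball
is relatively compact for the weak topology of `E'`. -/
def IsWAP (m : E →L[ℂ] E →L[ℂ] E) (μ : Dl E) : Prop :=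
  IsCompact (closure ((toWeakSpace ℂ (Dl E)) '' ((fun a => lAct m a μ) '' closedBall (0 : E) 1)))

/-- `μ` is an almost periodic functional on the algebra `(E, m)`: the orbit map
`a ↦ a·μ` is a compact operator `E → E'`. -/
def IsAP (m : E →L[ℂ] E →L[ℂ] E) (μ : Dl E) : Prop :=
  IsCompact (closure ((fun a => lAct m a μ) '' closedBall (0 : E) 1))

end Arens

/-- A Banach algebra is Arens regular when its two Arens products coincide. -/
def ArensRegular (A : Type u) [NonUnitalNormedRing A] [NormedSpace ℂ A]
    [IsScalarTower ℂ A A] [SMulCommClass ℂ A A] : Prop :=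
  ArensRegularWith (ContinuousLinearMap.mul ℂ A)

end UPaper

section FiniteRank

variable {𝕜 E F : Type*} [NontriviallyNormedField 𝕜] [NormedAddCommGroup E] [NormedSpace 𝕜 E]
  [NormedAddCommGroup F] [NormedSpace 𝕜 F]

theorem finiteDimensional_range_smulRight (g : E →L[𝕜] 𝕜) (x : F) :
    FiniteDimensional 𝕜 (LinearMap.range (g.smulRight x : E →ₗ[𝕜] F)) := by
  refine Submodule.finiteDimensional_of_le (S₂ := 𝕜 ∙ x) ?_
  rintro _ ⟨z, rfl⟩
  exact Submodule.smul_mem _ _ (Submodule.mem_span_singleton_self x)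

theorem exists_eq_sum_smulRight [CompleteSpace 𝕜] (T : E →L[𝕜] F)
    (hT : FiniteDimensional 𝕜 (LinearMap.range (T : E →ₗ[𝕜] F))) :
    ∃ (n : ℕ) (x : Fin n → F) (g : Fin n → E →L[𝕜] 𝕜), T = ∑ i, (g i).smulRight (x i) := by
  set p := LinearMap.range (T : E →ₗ[𝕜] F)
  let b := Module.finBasis 𝕜 p
  let Tp : E →L[𝕜] p := T.codRestrict p fun z ↦ LinearMap.mem_range_self _ z
  refine ⟨Module.finrank 𝕜 p, fun i ↦ b i, fun i ↦ (b.coord i).toContinuousLinearMap.comp Tp, ?_⟩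
  ext z
  have hz := congrArg p.subtype (b.sum_repr (Tp z))
  simp only [map_sum, map_smul, Submodule.coe_subtype] at hz
  simpa [sum_apply, Tp] using hz.symm

theorem FiniteDimensional.of_isCompactOperator_of_bound [CompleteSpace 𝕜] (L : E →L[𝕜] F)
    (hL : IsCompactOperator L) {K : NNReal} (hK : ∀ x, ‖x‖ ≤ K * ‖L x‖) :
    FiniteDimensional 𝕜 E := by
  obtain ⟨C, hC, hLC⟩ := hL
  exact .of_totallyBounded_nhds_zero 𝕜 hLC <|
    totallyBounded_preimage (L.isUniformEmbedding_of_bound hK).isUniformInducing hC.totallyBounded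

end FiniteRank

theorem Topology.IsInducing.dense_preimage_of_range_eq_closure {X Y : Type*}
    [TopologicalSpace X] [TopologicalSpace Y] {f : X → Y} (hf : IsInducing f) {S : Set Y}
    (hS : Set.range f = closure S) : Dense (f ⁻¹' S) := by
  have hSf : f '' (f ⁻¹' S) = S := Set.image_preimage_eq_of_subset (hS ▸ subset_closure)
  rw [dense_iff_closure_eq, hf.closure_eq_preimage_closure_image, hSf, ← hS, Set.preimage_range]

theorem exists_lift_of_norm_eq {𝕜 E F G : Type*} [NontriviallyNormedField 𝕜]
    [NormedAddCommGroup E] [NormedSpace 𝕜 E] [NormedAddCommGroup F] [NormedSpace 𝕜 F]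
    [NormedAddCommGroup G] [NormedSpace 𝕜 G] (φ : G →ₗ[𝕜] F) (hφ : ∀ a, ‖φ a‖ = ‖a‖)
    (T : E →L[𝕜] F) (hT : ∀ y, T y ∈ LinearMap.range φ) :
    ∃ ψ : E →L[𝕜] G, ∀ y, φ (ψ y) = T y := by
  let e := LinearEquiv.ofInjective φ (AddMonoidHomClass.isometry_of_norm φ hφ).injective
  let ψ : E →ₗ[𝕜] G := e.symm.toLinearMap ∘ₗ (T : E →ₗ[𝕜] F).codRestrict _ hT
  have hψ : ∀ y, φ (ψ y) = T y := fun y ↦ congrArg Subtype.val (e.apply_symm_apply _)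
  refine ⟨ψ.mkContinuous ‖T‖ fun y ↦ ?_, hψ⟩
  rw [← hφ, hψ]
  exact T.le_opNorm y

namespace UPaper

theorem IsAP.isCompactOperator {E : Type u} [NormedAddCommGroup E] [NormedSpace ℂ E]
    {m : E →L[ℂ] E →L[ℂ] E} {μ : Dl E} (h : IsAP m μ) : IsCompactOperator ((lAct m).flip μ) :=
  (isCompactOperator_iff_isCompact_closure_image_closedBall ((lAct m).flip μ : E →ₗ[ℂ] Dl E)
    one_pos).2 h

section Approximable

variable {E : Type u} [NormedAddCommGroup E] [NormedSpace ℂ E] {A : Type v}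
  [NonUnitalNormedRing A] [NormedSpace ℂ A] {φ : A →ₗ[ℂ] (E →L[ℂ] E)}

theorem smulRight_mem_range
    (hrange : Set.range φ =
      closure {T : E →L[ℂ] E | FiniteDimensional ℂ (LinearMap.range (T : E →ₗ[ℂ] E))})
    (g : Dl E) (x : E) : g.smulRight x ∈ Set.range φ :=
  hrange ▸ subset_closure (finiteDimensional_range_smulRight g x)

theorem exists_smulRight_apply_ne_zero (hiso : ∀ a : A, ‖φ a‖ = ‖a‖)
    (hrange : Set.range φ =
      closure {T : E →L[ℂ] E | FiniteDimensional ℂ (LinearMap.range (T : E →ₗ[ℂ] E))})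
    {U : Dl A} (hU : U ≠ 0) : ∃ (g : Dl E) (x : E) (a : A), φ a = g.smulRight x ∧ U a ≠ 0 := by
  by_contra! hU_rankOne
  have hφ := AddMonoidHomClass.isometry_of_norm φ hiso
  have hU_finiteRank : ∀ b : A, FiniteDimensional ℂ (LinearMap.range (φ b : E →ₗ[ℂ] E)) →
      U b = 0 := by
    intro b hb
    obtain ⟨n, x, g, hbg⟩ := exists_eq_sum_smulRight (φ b) hb
    choose c hc using fun i ↦ smulRight_mem_range hrange (g i) (x i)
    have hbc : b = ∑ i, c i := hφ.injective (by simp [hbg, hc])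
    simp [hbc, fun i ↦ hU_rankOne _ _ _ (hc i)]
  have hdense := hφ.isUniformInducing.isInducing.dense_preimage_of_range_eq_closure hrange
  exact hU <| ext <| congrFun (Continuous.ext_on hdense U.continuous continuous_zero hU_finiteRank)

theorem norm_mul_norm_le_norm_lAct_mul_norm [IsScalarTower ℂ A A] [SMulCommClass ℂ A A]
    (hiso : ∀ a : A, ‖φ a‖ = ‖a‖)
    (hmul : ∀ a b : A, φ (a * b) = φ a * φ b)
    (hrank1 : ∀ (g : Dl E) (x : E), g.smulRight x ∈ Set.range φ) (U : Dl A)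
    {g : Dl E} {x₀ y : E} {a₀ a : A} (ha₀ : φ a₀ = g.smulRight x₀) (ha : φ a = g.smulRight y) :
    ‖y‖ * ‖U a₀‖ ≤ ‖lAct (ContinuousLinearMap.mul ℂ A) a U‖ * ‖x₀‖ := by
  obtain ⟨f, hf, hfy⟩ := exists_dual_vector'' ℂ y
  obtain ⟨b, hb⟩ := hrank1 f x₀
  have hba : b * a = f y • a₀ := (AddMonoidHomClass.isometry_of_norm φ hiso).injective <| by
    rw [hmul, hb, ha, map_smul, ha₀, mul_def, smulRight_comp_smulRight]
    ext z
    simp [smul_smul, mul_comm]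
  have hb_norm : ‖b‖ ≤ ‖x₀‖ := by
    rw [← hiso, hb, norm_smulRight_apply]
    exact mul_le_of_le_one_left (norm_nonneg _) hf
  calc ‖y‖ * ‖U a₀‖ = ‖lAct (ContinuousLinearMap.mul ℂ A) a U b‖ := by
        simp [lAct, hba, hfy]
    _ ≤ ‖lAct (ContinuousLinearMap.mul ℂ A) a U‖ * ‖b‖ := le_opNorm _ _
    _ ≤ ‖lAct (ContinuousLinearMap.mul ℂ A) a U‖ * ‖x₀‖ := by gcongr

end Approximable

theorem ap_trivial_for_approximable_operators_general
    {E : Type u} [NormedAddCommGroup E] [NormedSpace ℂ E]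
    (hE : ¬ FiniteDimensional ℂ E)
    {A : Type v}
    [NonUnitalNormedRing A] [NormedSpace ℂ A] [IsScalarTower ℂ A A] [SMulCommClass ℂ A A]
    (φ : A →ₗ[ℂ] (E →L[ℂ] E))
    (hiso : ∀ a : A, ‖φ a‖ = ‖a‖)
    (hmul : ∀ a b : A, φ (a * b) = φ a * φ b)
    (hrange : Set.range φ =
      closure {T : E →L[ℂ] E | FiniteDimensional ℂ (LinearMap.range (T : E →ₗ[ℂ] E))}) :
    ∀ U : Dl A, IsAP (ContinuousLinearMap.mul ℂ A) U → U = 0 := by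
  intro U hU
  by_contra hU0
  obtain ⟨g, x₀, a₀, ha₀, hUa₀⟩ := exists_smulRight_apply_ne_zero hiso hrange hU0
  obtain ⟨ψ, hψ⟩ := exists_lift_of_norm_eq φ hiso (smulRightL ℂ E E g)
    fun y ↦ smulRight_mem_range hrange g y
  refine hE (.of_isCompactOperator_of_bound (((lAct _).flip U).comp ψ)
    (hU.isCompactOperator.comp_clm ψ) (K := ‖x₀‖₊ / ‖U a₀‖₊) fun y ↦ ?_)
  have := norm_mul_norm_le_norm_lAct_mul_norm hiso hmul (smulRight_mem_range hrange) U ha₀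
    (hψ y)
  rw [NNReal.coe_div, coe_nnnorm, coe_nnnorm, div_mul_eq_mul_div, le_div_iff₀ (norm_pos_iff.2 hUa₀)]
  simpa [mul_comm] using this

/-- Let `E` be an infinite-dimensional Banach space and let
`𝒜 = 𝒜(E)` be the algebra of approximable operators on `E` (realised as a Banach
algebra `A` with an isometric algebra isomorphism `φ` onto the closure of the
finite-rank operators in `B(E)`).  Then `AP(𝒜') = {0}`: the only functional
`U ∈ 𝒜(E)'` for which the map `T ↦ T·U` is compact is `U = 0`. -/
theorem ap_trivial_for_approximable_operators
    {E : Type u} [NormedAddCommGroup E] [NormedSpace ℂ E] [CompleteSpace E]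
    (hE : ¬ FiniteDimensional ℂ E)
    {A : Type v}
    [NonUnitalNormedRing A] [NormedSpace ℂ A] [IsScalarTower ℂ A A] [SMulCommClass ℂ A A]
    [CompleteSpace A]
    (φ : A →ₗ[ℂ] (E →L[ℂ] E))
    (hiso : ∀ a : A, ‖φ a‖ = ‖a‖)
    (hmul : ∀ a b : A, φ (a * b) = φ a * φ b)
    (hrange : Set.range φ =
      closure {T : E →L[ℂ] E | FiniteDimensional ℂ (LinearMap.range (T : E →ₗ[ℂ] E))}) :
    ∀ U : Dl A, IsAP (ContinuousLinearMap.mul ℂ A) U → U = 0 :=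
  ap_trivial_for_approximable_operators_general hE φ hiso hmul hrange

end UPaper
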